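/- Let (m_i)_{i∈ℕ} be a strictly increasing sequence of natural numbers, and for each i ≥ 1 let y_i be a set of functions s : [m_i, m_{i+1}) → ℝ, and set w_i = { s ∈ y_i : ∑_{ℓ∈[m_i,m_{i+1})} s(ℓ) > 1/i² }. Then for every ē ∈ divs such that the restriction ē↾[m_i, m_{i+1}) belongs to y_i for all but finitely many i, there exists an infinite set A ⊆ ℕ such that for every i ∈ A \ {0} the restriction ē↾[m_i, m_{i+1}) belongs to w_i, and ∑_{i∈A} ∑_{ℓ∈[m_i,m_{i+1})} e_ℓ = ∞. -/

import Mathlib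

/-!
Let `s i` be the sum of `e` over the `i`-th block `[m i, m (i+1))`; the block sums telescope, so
`∑ s i = ∞`. Take `A` to be the set of blocks whose restriction lies in `w i`. Eventually every
block lies in `y i`, so the blocks outside `A` eventually satisfy `s i ≤ 1 / i²`, and their sum
converges. Hence the blocks in `A` alone carry a divergent sum, which forces `A` to be infinite.
-/

open Filter

/-- `Divs c` says that `c` is a sequence of nonnegative reals converging to `0`
whose series diverges, i.e. `c ∈ divs`. -/
def Divs (c : ℕ → ℝ) : Prop :=
  (∀ n, 0 ≤ c n) ∧ Tendsto c atTop (nhds 0) ∧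
    Tendsto (fun N => ∑ n ∈ Finset.range N, c n) atTop atTop

open Finset

theorem tendsto_sum_range_sum_Ico_atTop {e : ℕ → ℝ} {m : ℕ → ℕ} (hm : StrictMono m)
    (he : Tendsto (fun N => ∑ n ∈ range N, e n) atTop atTop) :
    Tendsto (fun N => ∑ i ∈ range N, ∑ ℓ ∈ Ico (m i) (m (i + 1)), e ℓ) atTop atTop := by
  have hblock : ∀ i, ∑ ℓ ∈ Ico (m i) (m (i + 1)), e ℓ
      = ∑ n ∈ range (m (i + 1)), e n - ∑ n ∈ range (m i), e n := fun i =>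
    sum_Ico_eq_sub _ (hm.monotone i.le_succ)
  simp only [hblock, sum_range_sub (fun i => ∑ n ∈ range (m i), e n)]
  exact tendsto_atTop_add_const_right _ _ (he.comp hm.tendsto_atTop)

theorem tendsto_sum_range_indicator_atTop {s b : ℕ → ℝ} {A : Set ℕ} (hs : ∀ i, 0 ≤ s i)
    (hdiv : Tendsto (fun N => ∑ i ∈ range N, s i) atTop atTop) (hb : Summable b)
    (hsmall : ∀ᶠ i in atTop, i ∉ A → s i ≤ b i) :
    Tendsto (fun N => ∑ i ∈ range N, A.indicator s i) atTop atTop := by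
  have hcompl : Summable (Aᶜ.indicator s) := by
    refine hb.abs.of_norm_bounded_eventually_nat (hsmall.mono fun i hi => ?_)
    by_cases hiA : i ∈ A
    · simp [hiA]
    · simpa [hiA, abs_of_nonneg (hs i)] using (hi hiA).trans (le_abs_self _)
  rw [← not_summable_iff_tendsto_nat_atTop_of_nonneg (Set.indicator_nonneg fun i _ => hs i)]
  rw [← not_summable_iff_tendsto_nat_atTop_of_nonneg hs] at hdiv
  exact fun hA => hdiv (Set.indicator_self_add_compl A s ▸ hA.add hcompl)

theorem Set.infinite_of_tendsto_sum_range_indicator {s : ℕ → ℝ} {A : Set ℕ}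
    (h : Tendsto (fun N => ∑ i ∈ Finset.range N, A.indicator s i) atTop atTop) : A.Infinite :=
  fun hA => not_tendsto_atTop_of_tendsto_nhds
    (summable_of_hasFiniteSupport (hA.subset Set.support_indicator_subset)).tendsto_sum_tsum_nat h

theorem exists_infinite_divergent_selector (m : ℕ → ℕ) (hm : StrictMono m)
    (y : (i : ℕ) → Set ((Set.Ico (m i) (m (i + 1))) → ℝ))
    (e : ℕ → ℝ) (he : Divs e)
    (hey : ∀ᶠ i in atTop, (fun ℓ : Set.Ico (m i) (m (i + 1)) => e ℓ) ∈ y i) :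
    ∃ A : Set ℕ, A.Infinite ∧
      (∀ i ∈ A, i ≠ 0 →
        (fun ℓ : Set.Ico (m i) (m (i + 1)) => e ℓ) ∈ y i ∧
        1 / (i : ℝ) ^ 2 < ∑ ℓ ∈ Finset.Ico (m i) (m (i + 1)), e ℓ) ∧
      Tendsto (fun N => ∑ i ∈ Finset.range N,
          A.indicator (fun j => ∑ ℓ ∈ Finset.Ico (m j) (m (j + 1)), e ℓ) i)
        atTop atTop := by
  obtain ⟨he_nonneg, -, he_div⟩ := he
  set s : ℕ → ℝ := fun j => ∑ ℓ ∈ Ico (m j) (m (j + 1)), e ℓ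
  set A : Set ℕ :=
    {i | (fun ℓ : Set.Ico (m i) (m (i + 1)) => e ℓ) ∈ y i ∧ 1 / (i : ℝ) ^ 2 < s i}
  have hsmall : ∀ᶠ i in atTop, i ∉ A → s i ≤ 1 / (i : ℝ) ^ 2 :=
    hey.mono fun i hiy hiA => not_lt.mp fun hlt => hiA ⟨hiy, hlt⟩
  have hA_div : Tendsto (fun N => ∑ i ∈ range N, A.indicator s i) atTop atTop :=
    tendsto_sum_range_indicator_atTop (fun i => sum_nonneg fun ℓ _ => he_nonneg ℓ)
      (tendsto_sum_range_sum_Ico_atTop hm he_div)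
      (Real.summable_one_div_nat_pow.mpr one_lt_two) hsmall
  exact ⟨A, Set.infinite_of_tendsto_sum_range_indicator hA_div,
    fun i hiA _ => hiA, hA_div⟩
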